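/- arXiv:2505.03765 — 2 statements merged into one kernel-verified Lean document; each statement's English description precedes it below -/
import Mathlib

section
/- Let g: ℝ³ → ℝ be smooth (arguments written (x,y,s)) and let u, p: ℝ³ → ℝ be smooth with ∂ₓ∂ᵧ∂_z u ≡ 0 and ∂ₓ∂ᵧ∂_z p ≡ 0 on ℝ³. Set G(x,y,z) = g(x,y,(∂ₓ∂ᵧu)(x,y,z)). Then ∂ₓ∂ᵧ∂_z( (1/2)(∂ₓG)(∂ₓ∂ᵧp) + G·∂ₓ²∂ᵧp ) ≡ 0 on ℝ³. -/
/-- Partial derivative in the first variable of a function of three real variables. -/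
noncomputable def pdx (f : ℝ → ℝ → ℝ → ℝ) : ℝ → ℝ → ℝ → ℝ :=
  fun x y z => deriv (fun t => f t y z) x

/-- Partial derivative in the second variable of a function of three real variables. -/
noncomputable def pdy (f : ℝ → ℝ → ℝ → ℝ) : ℝ → ℝ → ℝ → ℝ :=
  fun x y z => deriv (fun t => f x t z) y

/-- Partial derivative in the third variable of a function of three real variables. -/
noncomputable def pdz (f : ℝ → ℝ → ℝ → ℝ) : ℝ → ℝ → ℝ → ℝ :=
  fun x y z => deriv (fun t => f x y t) z

/-- Directional (partial) derivative of a function on `ℝ³` in direction `v`. -/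
noncomputable def Dv (v : ℝ × ℝ × ℝ) (F : ℝ × ℝ × ℝ → ℝ) : ℝ × ℝ × ℝ → ℝ :=
  fun q => fderiv ℝ F q v

lemma contDiff_Dv {F : ℝ × ℝ × ℝ → ℝ} (hF : ContDiff ℝ (⊤ : ℕ∞) F) (v : ℝ × ℝ × ℝ) :
    ContDiff ℝ (⊤ : ℕ∞) (Dv v F) :=
  (hF.fderiv_right (by simp)).clm_apply contDiff_const

lemma Dv_swap {F : ℝ × ℝ × ℝ → ℝ} (hF : ContDiff ℝ (⊤ : ℕ∞) F) (v w q : ℝ × ℝ × ℝ) :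
    Dv w (Dv v F) q = Dv v (Dv w F) q := by
  have hd : Differentiable ℝ F := hF.differentiable (by simp)
  have hf' : ContDiff ℝ (⊤ : ℕ∞) (fderiv ℝ F) := hF.fderiv_right (by simp)
  have hx : HasFDerivAt (fderiv ℝ F) (fderiv ℝ (fderiv ℝ F) q) q :=
    (hf'.differentiable (by simp) q).hasFDerivAt
  have hsymm := second_derivative_symmetric (f := F) (fun y => (hd y).hasFDerivAt) hx
  have h1 : HasFDerivAt (Dv v F)
      ((ContinuousLinearMap.apply ℝ ℝ v).comp (fderiv ℝ (fderiv ℝ F) q)) q :=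
    (ContinuousLinearMap.apply ℝ ℝ v).hasFDerivAt.comp q hx
  have h2 : HasFDerivAt (Dv w F)
      ((ContinuousLinearMap.apply ℝ ℝ w).comp (fderiv ℝ (fderiv ℝ F) q)) q :=
    (ContinuousLinearMap.apply ℝ ℝ w).hasFDerivAt.comp q hx
  show fderiv ℝ (Dv v F) q w = fderiv ℝ (Dv w F) q v
  rw [h1.fderiv, h2.fderiv]
  simp only [ContinuousLinearMap.coe_comp', Function.comp_apply,
    ContinuousLinearMap.apply_apply]
  exact hsymm w v

lemma pdx_eq {f : ℝ → ℝ → ℝ → ℝ} {F : ℝ × ℝ × ℝ → ℝ}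
    (hF : ∀ q : ℝ × ℝ × ℝ, F q = f q.1 q.2.1 q.2.2) (hd : Differentiable ℝ F)
    (x y z : ℝ) : pdx f x y z = Dv (1, 0, 0) F (x, y, z) := by
  have hline : HasDerivAt (fun t : ℝ => ((t, y, z) : ℝ × ℝ × ℝ)) (1, 0, 0) x :=
    HasDerivAt.prodMk (hasDerivAt_id x) (HasDerivAt.prodMk (hasDerivAt_const x y) (hasDerivAt_const x z))
  have h1 : HasDerivAt (fun t : ℝ => F (t, y, z)) (fderiv ℝ F (x, y, z) (1, 0, 0)) x :=
    (hd (x, y, z)).hasFDerivAt.comp_hasDerivAt x hline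
  have h2 : (fun t : ℝ => f t y z) = fun t => F (t, y, z) :=
    funext fun t => (hF (t, y, z)).symm
  show deriv (fun t => f t y z) x = _
  rw [h2]
  exact h1.deriv

lemma pdy_eq {f : ℝ → ℝ → ℝ → ℝ} {F : ℝ × ℝ × ℝ → ℝ}
    (hF : ∀ q : ℝ × ℝ × ℝ, F q = f q.1 q.2.1 q.2.2) (hd : Differentiable ℝ F)
    (x y z : ℝ) : pdy f x y z = Dv (0, 1, 0) F (x, y, z) := by
  have hline : HasDerivAt (fun t : ℝ => ((x, t, z) : ℝ × ℝ × ℝ)) (0, 1, 0) y :=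
    HasDerivAt.prodMk (hasDerivAt_const y x) (HasDerivAt.prodMk (hasDerivAt_id y) (hasDerivAt_const y z))
  have h1 : HasDerivAt (fun t : ℝ => F (x, t, z)) (fderiv ℝ F (x, y, z) (0, 1, 0)) y :=
    (hd (x, y, z)).hasFDerivAt.comp_hasDerivAt y hline
  have h2 : (fun t : ℝ => f x t z) = fun t => F (x, t, z) :=
    funext fun t => (hF (x, t, z)).symm
  show deriv (fun t => f x t z) y = _
  rw [h2]
  exact h1.deriv

lemma pdz_eq {f : ℝ → ℝ → ℝ → ℝ} {F : ℝ × ℝ × ℝ → ℝ}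
    (hF : ∀ q : ℝ × ℝ × ℝ, F q = f q.1 q.2.1 q.2.2) (hd : Differentiable ℝ F)
    (x y z : ℝ) : pdz f x y z = Dv (0, 0, 1) F (x, y, z) := by
  have hline : HasDerivAt (fun t : ℝ => ((x, y, t) : ℝ × ℝ × ℝ)) (0, 0, 1) z :=
    HasDerivAt.prodMk (hasDerivAt_const z x) (HasDerivAt.prodMk (hasDerivAt_const z y) (hasDerivAt_id z))
  have h1 : HasDerivAt (fun t : ℝ => F (x, y, t)) (fderiv ℝ F (x, y, z) (0, 0, 1)) z :=
    (hd (x, y, z)).hasFDerivAt.comp_hasDerivAt z hline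
  have h2 : (fun t : ℝ => f x y t) = fun t => F (x, y, t) :=
    funext fun t => (hF (x, y, t)).symm
  show deriv (fun t => f x y t) z = _
  rw [h2]
  exact h1.deriv

/-- If `f_{xyz} = 0` for a smooth `f`, then `f_{xy}` does not depend on the third variable. -/
lemma key_zindep {f : ℝ → ℝ → ℝ → ℝ}
    (hf : ContDiff ℝ (⊤ : ℕ∞) fun q : ℝ × ℝ × ℝ => f q.1 q.2.1 q.2.2)
    (h0 : ∀ x y z : ℝ, pdx (pdy (pdz f)) x y z = 0)
    (x y z : ℝ) : pdx (pdy f) x y z = pdx (pdy f) x y 0 := by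
  set F : ℝ × ℝ × ℝ → ℝ := fun q => f q.1 q.2.1 q.2.2 with hFdef
  have hF : ∀ q : ℝ × ℝ × ℝ, F q = f q.1 q.2.1 q.2.2 := fun q => rfl
  have hdF : Differentiable ℝ F := hf.differentiable (by simp)
  have c3 : ContDiff ℝ (⊤ : ℕ∞) (Dv (0,0,1) F) := contDiff_Dv hf _
  have c2 : ContDiff ℝ (⊤ : ℕ∞) (Dv (0,1,0) F) := contDiff_Dv hf _
  have c23 : ContDiff ℝ (⊤ : ℕ∞) (Dv (0,1,0) (Dv (0,0,1) F)) := contDiff_Dv c3 _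
  have c12 : ContDiff ℝ (⊤ : ℕ∞) (Dv (1,0,0) (Dv (0,1,0) F)) := contDiff_Dv c2 _
  have h3 : ∀ q : ℝ × ℝ × ℝ, Dv (0,0,1) F q = pdz f q.1 q.2.1 q.2.2 :=
    fun q => (pdz_eq hF hdF q.1 q.2.1 q.2.2).symm
  have h23 : ∀ q : ℝ × ℝ × ℝ, Dv (0,1,0) (Dv (0,0,1) F) q = pdy (pdz f) q.1 q.2.1 q.2.2 :=
    fun q => (pdy_eq h3 (c3.differentiable (by simp)) q.1 q.2.1 q.2.2).symm
  have h123 : ∀ q : ℝ × ℝ × ℝ, Dv (1,0,0) (Dv (0,1,0) (Dv (0,0,1) F)) q = 0 :=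
    fun q => ((pdx_eq h23 (c23.differentiable (by simp)) q.1 q.2.1 q.2.2).symm).trans
      (h0 q.1 q.2.1 q.2.2)
  have hswapfun : Dv (0,0,1) (Dv (0,1,0) F) = Dv (0,1,0) (Dv (0,0,1) F) :=
    funext fun q => Dv_swap hf (0,1,0) (0,0,1) q
  have h2' : ∀ q : ℝ × ℝ × ℝ, Dv (0,0,1) (Dv (1,0,0) (Dv (0,1,0) F)) q = 0 := by
    intro q
    have hs := Dv_swap c2 (1,0,0) (0,0,1) q
    rw [hs, hswapfun]
    exact h123 q
  -- constancy in the third variable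
  have hline : Differentiable ℝ (fun t : ℝ => Dv (1,0,0) (Dv (0,1,0) F) (x, y, t)) :=
    (c12.differentiable (by simp)).comp
      ((differentiable_const x).prodMk ((differentiable_const y).prodMk differentiable_id))
  have hderiv0 : ∀ t : ℝ, deriv (fun s : ℝ => Dv (1,0,0) (Dv (0,1,0) F) (x, y, s)) t = 0 := by
    intro t
    have h := pdz_eq (f := fun a b c => Dv (1,0,0) (Dv (0,1,0) F) (a,b,c))
        (F := Dv (1,0,0) (Dv (0,1,0) F)) (fun q => rfl) (c12.differentiable (by simp)) x y t
    exact h.trans (h2' (x, y, t))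
  have hc := is_const_of_deriv_eq_zero hline hderiv0 z 0
  have h2e : ∀ q : ℝ × ℝ × ℝ, Dv (0,1,0) F q = pdy f q.1 q.2.1 q.2.2 :=
    fun q => (pdy_eq hF hdF q.1 q.2.1 q.2.2).symm
  have h12 : ∀ a b c : ℝ, pdx (pdy f) a b c = Dv (1,0,0) (Dv (0,1,0) F) (a,b,c) :=
    fun a b c => pdx_eq h2e (c2.differentiable (by simp)) a b c
  rw [h12 x y z, h12 x y 0]
  exact hc

lemma pdz_of_indep {f : ℝ → ℝ → ℝ → ℝ} (h : ∀ a b c : ℝ, f a b c = f a b 0) :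
    ∀ a b c : ℝ, pdz f a b c = 0 := by
  intro a b c
  show deriv (fun t => f a b t) c = 0
  have : (fun t : ℝ => f a b t) = fun _ => f a b 0 := funext fun t => h a b t
  rw [this, deriv_const]

lemma pdy_of_zero {f : ℝ → ℝ → ℝ → ℝ} (h : ∀ a b c : ℝ, f a b c = 0) :
    ∀ a b c : ℝ, pdy f a b c = 0 := by
  intro a b c
  show deriv (fun t => f a t c) b = 0
  have : (fun t : ℝ => f a t c) = fun _ => (0 : ℝ) := funext fun t => h a t c
  rw [this, deriv_const]

lemma pdx_of_zero {f : ℝ → ℝ → ℝ → ℝ} (h : ∀ a b c : ℝ, f a b c = 0) :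
    ∀ a b c : ℝ, pdx f a b c = 0 := by
  intro a b c
  show deriv (fun t => f t b c) a = 0
  have : (fun t : ℝ => f t b c) = fun _ => (0 : ℝ) := funext fun t => h t b c
  rw [this, deriv_const]

/-- The condition `ℓ_E(H_u) = 0` on the cotangent covering of `u_{xyz} = 0` for the
variational bivector `B₃ = (1/2)D_x(g)p_{xy} + g·p_{xxy}` with `g = g(x,y,u_{xy})`. -/
theorem uxyz_B3_linearization_condition
    (g u p : ℝ → ℝ → ℝ → ℝ)
    (hg : ContDiff ℝ (⊤ : ℕ∞) fun z : ℝ × ℝ × ℝ => g z.1 z.2.1 z.2.2)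
    (hu : ContDiff ℝ (⊤ : ℕ∞) fun z : ℝ × ℝ × ℝ => u z.1 z.2.1 z.2.2)
    (hp : ContDiff ℝ (⊤ : ℕ∞) fun z : ℝ × ℝ × ℝ => p z.1 z.2.1 z.2.2)
    (huxyz : ∀ x y z : ℝ, pdx (pdy (pdz u)) x y z = 0)
    (hpxyz : ∀ x y z : ℝ, pdx (pdy (pdz p)) x y z = 0)
    (G : ℝ → ℝ → ℝ → ℝ)
    (Gdef : G = fun x y z => g x y (pdx (pdy u) x y z)) :
    ∀ x y z : ℝ,
      pdx (pdy (pdz (fun a b c =>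
        (1/2) * pdx G a b c * pdx (pdy p) a b c
          + G a b c * pdx (pdx (pdy p)) a b c))) x y z = 0 := by
  intro x y z
  have hu12 : ∀ a b c : ℝ, pdx (pdy u) a b c = pdx (pdy u) a b 0 :=
    fun a b c => key_zindep hu huxyz a b c
  have hp12 : ∀ a b c : ℝ, pdx (pdy p) a b c = pdx (pdy p) a b 0 :=
    fun a b c => key_zindep hp hpxyz a b c
  have hG : ∀ a b c : ℝ, G a b c = G a b 0 := by
    intro a b c
    rw [Gdef]
    show g a b (pdx (pdy u) a b c) = g a b (pdx (pdy u) a b 0)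
    rw [hu12 a b c]
  have hGx : ∀ a b c : ℝ, pdx G a b c = pdx G a b 0 := by
    intro a b c
    show deriv (fun t => G t b c) a = deriv (fun t => G t b 0) a
    congr 1
    funext t
    exact hG t b c
  have hpxx : ∀ a b c : ℝ, pdx (pdx (pdy p)) a b c = pdx (pdx (pdy p)) a b 0 := by
    intro a b c
    show deriv (fun t => pdx (pdy p) t b c) a = deriv (fun t => pdx (pdy p) t b 0) a
    congr 1
    funext t
    exact hp12 t b c
  have hΦz : ∀ a b c : ℝ,
      (1/2) * pdx G a b c * pdx (pdy p) a b c + G a b c * pdx (pdx (pdy p)) a b c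
        = (1/2) * pdx G a b 0 * pdx (pdy p) a b 0 + G a b 0 * pdx (pdx (pdy p)) a b 0 := by
    intro a b c
    rw [hGx a b c, hG a b c, hp12 a b c, hpxx a b c]
  exact pdx_of_zero (pdy_of_zero (pdz_of_indep hΦz)) x y z
end

section
/- Let g: ℝ³ → ℝ be smooth (arguments written (x,y,s)) and let u, p: ℝ³ → ℝ be smooth with ∂ₓ∂ᵧ∂_z u ≡ 0 and ∂ₓ∂ᵧ∂_z p ≡ 0 on ℝ³. Define (B₄p)(x,y,z) = (1/2)( (∂g/∂x)(x,y,u_{xy})·u_{xyy} − (∂g/∂y)(x,y,u_{xy})·u_{xxy} )·(∂ₓ∂ᵧp) + g(x,y,u_{xy})·( u_{xyy}·∂ₓ²∂ᵧp − u_{xxy}·∂ₓ∂ᵧ²p ), where u_{xy} = ∂ₓ∂ᵧu, u_{xxy} = ∂ₓ²∂ᵧu, u_{xyy} = ∂ₓ∂ᵧ²u. Then ∂ₓ∂ᵧ∂_z(B₄p) ≡ 0 on ℝ³. -/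
namespace B4Aux

/-- Uncurried version of a function of three real variables. -/
def unc (f : ℝ → ℝ → ℝ → ℝ) : ℝ × ℝ × ℝ → ℝ := fun v => f v.1 v.2.1 v.2.2

noncomputable abbrev e1 : ℝ × ℝ × ℝ := (1, 0, 0)
noncomputable abbrev e2 : ℝ × ℝ × ℝ := (0, 1, 0)
noncomputable abbrev e3 : ℝ × ℝ × ℝ := (0, 0, 1)

theorem hasDerivAt_x (f : ℝ → ℝ → ℝ → ℝ) (hf : ContDiff ℝ (⊤ : ℕ∞) (unc f)) (x y z : ℝ) :
    HasDerivAt (fun t => f t y z) (fderiv ℝ (unc f) (x, y, z) e1) x := by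
  have hF := (hf.differentiable (by simp) (x, y, z)).hasFDerivAt
  have hL : HasDerivAt (fun t : ℝ => ((t, y, z) : ℝ × ℝ × ℝ)) e1 x :=
    HasDerivAt.prodMk (hasDerivAt_id x) (hasDerivAt_const x (y, z))
  exact hF.comp_hasDerivAt x hL

theorem hasDerivAt_y (f : ℝ → ℝ → ℝ → ℝ) (hf : ContDiff ℝ (⊤ : ℕ∞) (unc f)) (x y z : ℝ) :
    HasDerivAt (fun t => f x t z) (fderiv ℝ (unc f) (x, y, z) e2) y := by
  have hF := (hf.differentiable (by simp) (x, y, z)).hasFDerivAt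
  have hL : HasDerivAt (fun t : ℝ => ((x, t, z) : ℝ × ℝ × ℝ)) e2 y :=
    HasDerivAt.prodMk (hasDerivAt_const y x) (HasDerivAt.prodMk (hasDerivAt_id y) (hasDerivAt_const y z))
  exact hF.comp_hasDerivAt y hL

theorem hasDerivAt_z (f : ℝ → ℝ → ℝ → ℝ) (hf : ContDiff ℝ (⊤ : ℕ∞) (unc f)) (x y z : ℝ) :
    HasDerivAt (fun t => f x y t) (fderiv ℝ (unc f) (x, y, z) e3) z := by
  have hF := (hf.differentiable (by simp) (x, y, z)).hasFDerivAt
  have hL : HasDerivAt (fun t : ℝ => ((x, y, t) : ℝ × ℝ × ℝ)) e3 z :=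
    HasDerivAt.prodMk (hasDerivAt_const z x) (HasDerivAt.prodMk (hasDerivAt_const z y) (hasDerivAt_id z))
  exact hF.comp_hasDerivAt z hL

theorem pdx_eq (f : ℝ → ℝ → ℝ → ℝ) (hf : ContDiff ℝ (⊤ : ℕ∞) (unc f)) (x y z : ℝ) :
    pdx f x y z = fderiv ℝ (unc f) (x, y, z) e1 :=
  (hasDerivAt_x f hf x y z).deriv

theorem pdy_eq (f : ℝ → ℝ → ℝ → ℝ) (hf : ContDiff ℝ (⊤ : ℕ∞) (unc f)) (x y z : ℝ) :
    pdy f x y z = fderiv ℝ (unc f) (x, y, z) e2 :=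
  (hasDerivAt_y f hf x y z).deriv

theorem pdz_eq (f : ℝ → ℝ → ℝ → ℝ) (hf : ContDiff ℝ (⊤ : ℕ∞) (unc f)) (x y z : ℝ) :
    pdz f x y z = fderiv ℝ (unc f) (x, y, z) e3 :=
  (hasDerivAt_z f hf x y z).deriv

theorem unc_pdx_eq (f : ℝ → ℝ → ℝ → ℝ) (hf : ContDiff ℝ (⊤ : ℕ∞) (unc f)) :
    unc (pdx f) = fun v => fderiv ℝ (unc f) v e1 := by
  funext v
  exact pdx_eq f hf v.1 v.2.1 v.2.2

theorem unc_pdy_eq (f : ℝ → ℝ → ℝ → ℝ) (hf : ContDiff ℝ (⊤ : ℕ∞) (unc f)) :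
    unc (pdy f) = fun v => fderiv ℝ (unc f) v e2 := by
  funext v
  exact pdy_eq f hf v.1 v.2.1 v.2.2

theorem unc_pdz_eq (f : ℝ → ℝ → ℝ → ℝ) (hf : ContDiff ℝ (⊤ : ℕ∞) (unc f)) :
    unc (pdz f) = fun v => fderiv ℝ (unc f) v e3 := by
  funext v
  exact pdz_eq f hf v.1 v.2.1 v.2.2

theorem smooth_fderiv_apply (f : ℝ → ℝ → ℝ → ℝ) (hf : ContDiff ℝ (⊤ : ℕ∞) (unc f)) (a : ℝ × ℝ × ℝ) :
    ContDiff ℝ (⊤ : ℕ∞) (fun v => fderiv ℝ (unc f) v a) :=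
  (hf.fderiv_right (by simp)).clm_apply contDiff_const

theorem smooth_pdx (f : ℝ → ℝ → ℝ → ℝ) (hf : ContDiff ℝ (⊤ : ℕ∞) (unc f)) :
    ContDiff ℝ (⊤ : ℕ∞) (unc (pdx f)) := by
  rw [unc_pdx_eq f hf]; exact smooth_fderiv_apply f hf e1

theorem smooth_pdy (f : ℝ → ℝ → ℝ → ℝ) (hf : ContDiff ℝ (⊤ : ℕ∞) (unc f)) :
    ContDiff ℝ (⊤ : ℕ∞) (unc (pdy f)) := by
  rw [unc_pdy_eq f hf]; exact smooth_fderiv_apply f hf e2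

theorem smooth_pdz (f : ℝ → ℝ → ℝ → ℝ) (hf : ContDiff ℝ (⊤ : ℕ∞) (unc f)) :
    ContDiff ℝ (⊤ : ℕ∞) (unc (pdz f)) := by
  rw [unc_pdz_eq f hf]; exact smooth_fderiv_apply f hf e3

theorem fderiv_apply_comm (F : ℝ × ℝ × ℝ → ℝ) (hF : ContDiff ℝ (⊤ : ℕ∞) F) (w a b : ℝ × ℝ × ℝ) :
    fderiv ℝ (fun v => fderiv ℝ F v a) w b = fderiv ℝ (fun v => fderiv ℝ F v b) w a := by
  have hdF : Differentiable ℝ (fderiv ℝ F) :=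
    (hF.fderiv_right (m := (⊤ : ℕ∞)) (by simp)).differentiable (by simp)
  have key : ∀ c : ℝ × ℝ × ℝ,
      fderiv ℝ (fun v => fderiv ℝ F v c) w = (fderiv ℝ (fderiv ℝ F) w).flip c := by
    intro c
    have := fderiv_clm_apply (hdF w) (differentiableAt_const c)
    simpa using this
  have hsymm : ∀ v₁ v₂ : ℝ × ℝ × ℝ,
      fderiv ℝ (fderiv ℝ F) w v₁ v₂ = fderiv ℝ (fderiv ℝ F) w v₂ v₁ := by
    intro v₁ v₂
    exact second_derivative_symmetric
      (fun y => (hF.differentiable (by simp) y).hasFDerivAt) (hdF w).hasFDerivAt v₁ v₂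
  rw [key a, key b]
  simpa using hsymm b a

theorem pdx_pdz_comm (f : ℝ → ℝ → ℝ → ℝ) (hf : ContDiff ℝ (⊤ : ℕ∞) (unc f)) (x y z : ℝ) :
    pdx (pdz f) x y z = pdz (pdx f) x y z := by
  rw [pdx_eq (pdz f) (smooth_pdz f hf) x y z, pdz_eq (pdx f) (smooth_pdx f hf) x y z,
    unc_pdz_eq f hf, unc_pdx_eq f hf]
  exact (fderiv_apply_comm (unc f) hf (x, y, z) e1 e3).symm

theorem pdy_pdz_comm (f : ℝ → ℝ → ℝ → ℝ) (hf : ContDiff ℝ (⊤ : ℕ∞) (unc f)) (x y z : ℝ) :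
    pdy (pdz f) x y z = pdz (pdy f) x y z := by
  rw [pdy_eq (pdz f) (smooth_pdz f hf) x y z, pdz_eq (pdy f) (smooth_pdy f hf) x y z,
    unc_pdz_eq f hf, unc_pdy_eq f hf]
  exact (fderiv_apply_comm (unc f) hf (x, y, z) e2 e3).symm

theorem pdx_pdy_comm (f : ℝ → ℝ → ℝ → ℝ) (hf : ContDiff ℝ (⊤ : ℕ∞) (unc f)) (x y z : ℝ) :
    pdx (pdy f) x y z = pdy (pdx f) x y z := by
  rw [pdx_eq (pdy f) (smooth_pdy f hf) x y z, pdy_eq (pdx f) (smooth_pdx f hf) x y z,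
    unc_pdy_eq f hf, unc_pdx_eq f hf]
  exact (fderiv_apply_comm (unc f) hf (x, y, z) e1 e2).symm

theorem eq_of_pdz_zero (f : ℝ → ℝ → ℝ → ℝ) (hf : ContDiff ℝ (⊤ : ℕ∞) (unc f))
    (h : ∀ x y z, pdz f x y z = 0) (x y z : ℝ) : f x y z = f x y 0 := by
  have hd : Differentiable ℝ (fun t => f x y t) := fun t =>
    (hasDerivAt_z f hf x y t).differentiableAt
  exact is_const_of_deriv_eq_zero hd (fun t => h x y t) z 0

end B4Aux

open B4Aux
/-- The condition `ℓ_E(H_u) = 0` on the cotangent covering of `u_{xyz} = 0` for the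
variational bivector
`B₄ = (1/2)(∂g/∂x·u_{xyy} − ∂g/∂y·u_{xxy})p_{xy} + g(u_{xyy}p_{xxy} − u_{xxy}p_{xyy})`. -/
theorem uxyz_B4_linearization_condition
    (g u p : ℝ → ℝ → ℝ → ℝ)
    (hg : ContDiff ℝ (⊤ : ℕ∞) fun z : ℝ × ℝ × ℝ => g z.1 z.2.1 z.2.2)
    (hu : ContDiff ℝ (⊤ : ℕ∞) fun z : ℝ × ℝ × ℝ => u z.1 z.2.1 z.2.2)
    (hp : ContDiff ℝ (⊤ : ℕ∞) fun z : ℝ × ℝ × ℝ => p z.1 z.2.1 z.2.2)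
    (huxyz : ∀ x y z : ℝ, pdx (pdy (pdz u)) x y z = 0)
    (hpxyz : ∀ x y z : ℝ, pdx (pdy (pdz p)) x y z = 0)
    (B₄p : ℝ → ℝ → ℝ → ℝ)
    (B₄pdef : B₄p = fun x y z =>
      (1/2) * (pdx g x y (pdx (pdy u) x y z) * pdx (pdy (pdy u)) x y z
          - pdy g x y (pdx (pdy u) x y z) * pdx (pdx (pdy u)) x y z)
        * pdx (pdy p) x y z
      + g x y (pdx (pdy u) x y z)
        * (pdx (pdy (pdy u)) x y z * pdx (pdx (pdy p)) x y z
          - pdx (pdx (pdy u)) x y z * pdx (pdy (pdy p)) x y z)) :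
    ∀ x y z : ℝ, pdx (pdy (pdz B₄p)) x y z = 0 := by
  have hu' : ContDiff ℝ (⊤ : ℕ∞) (unc u) := hu
  have hp' : ContDiff ℝ (⊤ : ℕ∞) (unc p) := hp
  -- the generic argument for a smooth f with f_{xyz} = 0
  have main : ∀ f : ℝ → ℝ → ℝ → ℝ, ContDiff ℝ (⊤ : ℕ∞) (unc f) →
      (∀ x y z : ℝ, pdx (pdy (pdz f)) x y z = 0) →
      (∀ x y z : ℝ, pdx (pdy f) x y z = pdx (pdy f) x y 0) ∧
      (∀ x y z : ℝ, pdx (pdx (pdy f)) x y z = pdx (pdx (pdy f)) x y 0) ∧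
      (∀ x y z : ℝ, pdx (pdy (pdy f)) x y z = pdx (pdy (pdy f)) x y 0) := by
    intro f hf hfz
    have s1 : ContDiff ℝ (⊤ : ℕ∞) (unc (pdy f)) := smooth_pdy f hf
    have s2 : ContDiff ℝ (⊤ : ℕ∞) (unc (pdx (pdy f))) := smooth_pdx _ s1
    -- z-derivative of f_{xy} vanishes
    have hz1 : ∀ x y z : ℝ, pdz (pdx (pdy f)) x y z = 0 := by
      intro x y z
      rw [← pdx_pdz_comm (pdy f) s1 x y z]
      have e : pdz (pdy f) = pdy (pdz f) := by
        funext a b c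
        exact (pdy_pdz_comm f hf a b c).symm
      rw [e]
      exact hfz x y z
    have hz2 : ∀ x y z : ℝ, pdz (pdx (pdx (pdy f))) x y z = 0 := by
      intro x y z
      rw [← pdx_pdz_comm (pdx (pdy f)) s2 x y z]
      show deriv (fun t => pdz (pdx (pdy f)) t y z) x = 0
      have : (fun t => pdz (pdx (pdy f)) t y z) = fun _ => (0 : ℝ) := by
        funext t; exact hz1 t y z
      rw [this, deriv_const]
    have hz3 : ∀ x y z : ℝ, pdz (pdy (pdx (pdy f))) x y z = 0 := by
      intro x y z
      rw [← pdy_pdz_comm (pdx (pdy f)) s2 x y z]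
      show deriv (fun t => pdz (pdx (pdy f)) x t z) y = 0
      have : (fun t => pdz (pdx (pdy f)) x t z) = fun _ => (0 : ℝ) := by
        funext t; exact hz1 x t z
      rw [this, deriv_const]
    have eA : pdx (pdy (pdy f)) = pdy (pdx (pdy f)) := by
      funext a b c
      exact pdx_pdy_comm (pdy f) s1 a b c
    refine ⟨eq_of_pdz_zero _ s2 hz1, eq_of_pdz_zero _ (smooth_pdx _ s2) hz2, ?_⟩
    rw [eA]
    exact eq_of_pdz_zero _ (smooth_pdy _ s2) hz3
  obtain ⟨hu1, hu2, hu3⟩ := main u hu' huxyz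
  obtain ⟨hp1, hp2, hp3⟩ := main p hp' hpxyz
  -- B₄p is constant in z
  have hBz : ∀ x y z : ℝ, pdz B₄p x y z = 0 := by
    intro x y z
    show deriv (fun t => B₄p x y t) z = 0
    have : (fun t => B₄p x y t) = fun _ => B₄p x y 0 := by
      funext t
      rw [B₄pdef]
      simp only
      rw [hu1 x y t, hu2 x y t, hu3 x y t, hp1 x y t, hp2 x y t, hp3 x y t]
    rw [this, deriv_const]
  have hyz : ∀ x y z : ℝ, pdy (pdz B₄p) x y z = 0 := by
    intro x y z
    show deriv (fun t => pdz B₄p x t z) y = 0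
    have : (fun t => pdz B₄p x t z) = fun _ => (0 : ℝ) := by
      funext t; exact hBz x t z
    rw [this, deriv_const]
  intro x y z
  show deriv (fun t => pdy (pdz B₄p) t y z) x = 0
  have : (fun t => pdy (pdz B₄p) t y z) = fun _ => (0 : ℝ) := by
    funext t; exact hyz t y z
  rw [this, deriv_const]
end
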